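/- arXiv:2512.04687 — 7 statements merged into one kernel-verified Lean document; each statement's English description precedes it below -/
import Mathlib

section
/- For every countably indexed family of P-labelled trees (indexed by the natural numbers), there exist indices m < n such that the m-th and n-th trees are equivalent, i.e., each embeds into the other. -/
/-- A `P`-labelled tree: a finite node set `N`, an edge relation `E` such that
`(N,E)` is a (rooted, directed) tree, and a `≤`-monotone labelling `λ : N → P`. -/
structure PTree (P : Type) [PartialOrder P] where
  N : Type
  [fin : Fintype N]
  E : N → N → Prop
  label : N → P
  isTree : ∃ r : N, (∀ n, Relation.ReflTransGen E r n) ∧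
      (∀ n, n ≠ r → ∃! m, E m n) ∧ (∀ n, ¬ E n r)
  mono : ∀ i j, E i j → label i ≤ label j

/-- A `P`-embedding of `T` into `T'`. -/
def TreeEmb {P : Type} [PartialOrder P] (T T' : PTree P) (f : T.N → T'.N) : Prop :=
  (∀ i j, T.E i j → Relation.ReflTransGen T'.E (f i) (f j)) ∧
  (∀ k, T.label k = T'.label (f k))

/-- Two `P`-labelled trees are equivalent if each `P`-embeds into the other. -/
def TreeEquiv {P : Type} [PartialOrder P] (T T' : PTree P) : Prop :=
  (∃ f, TreeEmb T T' f) ∧ (∃ g, TreeEmb T' T g)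

/-- A `P`-labelled tree is strict if labels strictly increase along edges. -/
def StrictTree {P : Type} [PartialOrder P] (T : PTree P) : Prop :=
  ∀ i j, T.E i j → T.label i < T.label j

/-- The subtrees of `T` rooted at `i` and at `j` are `P`-isomorphic. -/
def SubIso {P : Type} [PartialOrder P] (T : PTree P) (i j : T.N) : Prop :=
  ∃ g : {n : T.N // Relation.ReflTransGen T.E i n} ≃
        {n : T.N // Relation.ReflTransGen T.E j n},
    (∀ a b, T.E a.1 b.1 ↔ T.E (g a).1 (g b).1) ∧
    (∀ a, T.label a.1 = T.label (g a).1)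

/-- A `P`-isomorphism between labelled trees. -/
def PIso {P : Type} [PartialOrder P] (T T' : PTree P) : Prop :=
  ∃ e : T.N ≃ T'.N, (∀ i j, T.E i j ↔ T'.E (e i) (e j)) ∧
    (∀ k, T.label k = T'.label (e k))

/-!
Give each node `v` the invariant `code k v`: its label together with the set of level-`(k-1)`
codes of the descendants of `v` carrying a strictly larger label. For finite `P` the codes of a
fixed level form a finite type, so by pigeonhole two trees of the family have the same root code
at a level exceeding `r p = |Ici p|` for every label `p`. An embedding is then built greedily from
the root: a node with its parent's label goes to the parent's image, and any other node to a
descendant of the parent's image with matching code. Each such step raises the label, hence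
lowers `r`, so the level of the codes that must still match never runs out.
-/

namespace PTree

open Relation

variable {P : Type} [PartialOrder P]

noncomputable def root (T : PTree P) : T.N :=
  T.isTree.choose

theorem root_reach (T : PTree P) (n : T.N) : ReflTransGen T.E T.root n :=
  T.isTree.choose_spec.1 n

theorem not_E_root (T : PTree P) (n : T.N) : ¬ T.E n T.root :=
  T.isTree.choose_spec.2.2 n

theorem ne_root_of_E (T : PTree P) {m n : T.N} (h : T.E m n) : n ≠ T.root :=
  fun hn => T.not_E_root m (hn ▸ h)

noncomputable def parent (T : PTree P) (n : T.N) (hn : n ≠ T.root) : T.N :=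
  (T.isTree.choose_spec.2.1 n hn).choose

theorem parent_E (T : PTree P) (n : T.N) (hn : n ≠ T.root) : T.E (T.parent n hn) n :=
  (T.isTree.choose_spec.2.1 n hn).choose_spec.1

theorem parent_eq (T : PTree P) {m n : T.N} (hn : n ≠ T.root) (h : T.E m n) :
    T.parent n hn = m :=
  ((T.isTree.choose_spec.2.1 n hn).choose_spec.2 m h).symm

theorem wellFounded_E (T : PTree P) : WellFounded T.E := by
  refine ⟨fun n => ?_⟩
  induction T.root_reach n with
  | refl => exact ⟨_, fun m hm => (T.not_E_root m hm).elim⟩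
  | tail _ hmn ih =>
    refine ⟨_, fun k hk => ?_⟩
    obtain rfl : k = _ := (T.parent_eq (T.ne_root_of_E hmn) hk).symm.trans
      (T.parent_eq (T.ne_root_of_E hmn) hmn)
    exact ih

theorem exists_map_of_extend {β : Type*} (T : PTree P) (Q : β → β → Prop) (R : T.N → β → Prop)
    {b : β} (hb : R T.root b) (hext : ∀ u v x, T.E u v → R u x → ∃ y, Q x y ∧ R v y) :
    ∃ f : T.N → β, (∀ v, R v (f v)) ∧ ∀ u v, T.E u v → Q (f u) (f v) := by
  classical
  let g : ∀ v, {b // R v b} := T.wellFounded_E.fix fun v rec =>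
    if hv : v = T.root then ⟨b, hv ▸ hb⟩
    else
      have hc := hext _ v _ (T.parent_E v hv) (rec _ (T.parent_E v hv)).2
      ⟨hc.choose, hc.choose_spec.2⟩
  have hg : ∀ v (hv : v ≠ T.root), Q (g (T.parent v hv)).1 (g v).1 := by
    intro v hv
    rw [show g v = _ from T.wellFounded_E.fix_eq _ v, dif_neg hv]
    exact (hext _ v _ (T.parent_E v hv) (g _).2).choose_spec.1
  exact ⟨fun v => (g v).1, fun v => (g v).2,
    fun u v huv => T.parent_eq (T.ne_root_of_E huv) huv ▸ hg v (T.ne_root_of_E huv)⟩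

def Code (P : Type) : ℕ → Type
  | 0 => Unit
  | k + 1 => P × Set (Code P k)

instance Code.finite {P : Type} [Finite P] : ∀ k, Finite (Code P k)
  | 0 => inferInstanceAs (Finite Unit)
  | k + 1 =>
    haveI := Code.finite (P := P) k
    inferInstanceAs (Finite (P × Set (Code P k)))

def Code.trunc {P : Type} : ∀ k, Code P (k + 1) → Code P k
  | 0, _ => ()
  | k + 1, (p, s) => ((p, Code.trunc k '' s) : P × Set (Code P k))

def higherDesc (T : PTree P) (v : T.N) : Set T.N :=
  {w | ReflTransGen T.E v w ∧ T.label v < T.label w}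

def code (T : PTree P) : ∀ k, T.N → Code P k
  | 0, _ => ()
  | k + 1, v => ((T.label v, T.code k '' T.higherDesc v) : P × Set (Code P k))

theorem trunc_code (T : PTree P) (k : ℕ) (v : T.N) :
    Code.trunc k (T.code (k + 1) v) = T.code k v := by
  induction k generalizing v with
  | zero => rfl
  | succ k ih =>
    change ((T.label v, Code.trunc k '' (T.code (k + 1) '' T.higherDesc v)) :
      P × Set (Code P k)) = (T.label v, T.code k '' T.higherDesc v)
    rw [Set.image_image]
    simp only [ih]

theorem code_eq_of_le {T T' : PTree P} {v : T.N} {v' : T'.N} {j k : ℕ} (hjk : j ≤ k)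
    (h : T.code k v = T'.code k v') : T.code j v = T'.code j v' := by
  induction hjk with
  | refl => exact h
  | step _ ih => exact ih (by rw [← trunc_code, h, trunc_code])

theorem higherDesc_subset {T : PTree P} {u v : T.N} (huv : ReflTransGen T.E u v)
    (hl : T.label u = T.label v) : T.higherDesc v ⊆ T.higherDesc u :=
  fun _ ⟨hvw, hlt⟩ => ⟨huv.trans hvw, hl ▸ hlt⟩

def Covers (k : ℕ) {T T' : PTree P} (v : T.N) (v' : T'.N) : Prop :=
  T.label v = T'.label v' ∧ T.code k '' T.higherDesc v ⊆ T'.code k '' T'.higherDesc v'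

theorem covers_of_code_succ_eq {k : ℕ} {T T' : PTree P} {v : T.N} {v' : T'.N}
    (h : T.code (k + 1) v = T'.code (k + 1) v') : Covers k v v' :=
  ⟨(Prod.ext_iff.1 h).1, (Prod.ext_iff.1 h).2.le⟩

theorem exists_treeEmb_of_code_root_eq {T T' : PTree P} {r : P → ℕ} (hr : StrictAnti r) {N : ℕ}
    (hN : ∀ p, r p ≤ N) (h : T.code (N + 1) T.root = T'.code (N + 1) T'.root) :
    ∃ f, TreeEmb T T' f := by
  have hext : ∀ u v u', T.E u v → Covers (r (T.label u)) u u' →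
      ∃ v', ReflTransGen T'.E u' v' ∧ Covers (r (T.label v)) v v' := by
    intro u v u' huv ⟨hl, hsub⟩
    rcases (T.mono u v huv).eq_or_lt with heq | hlt
    · refine ⟨u', .refl, heq.symm.trans hl, ?_⟩
      rw [← heq]
      exact (Set.image_mono (higherDesc_subset (.single huv) heq)).trans hsub
    · obtain ⟨v', hv', hcode⟩ := hsub ⟨v, ⟨.single huv, hlt⟩, rfl⟩
      exact ⟨v', hv'.1, covers_of_code_succ_eq (code_eq_of_le (hr hlt) hcode.symm)⟩
  obtain ⟨f, hcov, hf⟩ := T.exists_map_of_extend (ReflTransGen T'.E)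
    (fun v v' => Covers (r (T.label v)) v v')
    (covers_of_code_succ_eq (code_eq_of_le (Nat.succ_le_succ (hN _)) h)) hext
  exact ⟨f, hf, fun v => (hcov v).1⟩

end PTree

/-- every countable family of `P`-labelled trees contains
two equivalent trees with indices `m < n`. -/
theorem stmt0 (P : Type) [Fintype P] [PartialOrder P] (F : ℕ → PTree P) :
    ∃ m n : ℕ, m < n ∧ TreeEquiv (F m) (F n) := by
  obtain ⟨N, hN⟩ := Finite.exists_le fun p : P => (Set.Ici p).ncard
  have hr : StrictAnti fun p : P => (Set.Ici p).ncard :=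
    fun _ _ h => Set.ncard_lt_ncard (Set.Ici_ssubset_Ici.2 h)
  obtain ⟨m, n, hne, hmn⟩ :=
    Finite.exists_ne_map_eq_of_infinite fun i => (F i).code (N + 1) (F i).root
  have hequiv : ∀ i j, (F i).code (N + 1) (F i).root = (F j).code (N + 1) (F j).root →
      TreeEquiv (F i) (F j) := fun i j h =>
    ⟨PTree.exists_treeEmb_of_code_root_eq hr hN h,
      PTree.exists_treeEmb_of_code_root_eq hr hN h.symm⟩
  rcases hne.lt_or_gt with h | h
  · exact ⟨m, n, h, hequiv m n hmn⟩
  · exact ⟨n, m, h, hequiv n m hmn.symm⟩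
end

section
/- If a P-labelled tree (N,E,λ) has a duplicate (i,j), i.e., i E j and λ(i) = λ(j), then deleting node j and redirecting the children of j to be children of i yields a P-labelled tree (N',E',λ') with N' ⊊ N that is ∼-equivalent to (N,E,λ). -/
/-!
Collapsing `j` onto `i` is a `P`-embedding of `T` into the contracted tree: the edge `i E j`
goes to the trivial path at `i`, and labels are kept because `λ(i) = λ(j)`. Conversely the
inclusion `N \ {j} ⊆ N` is a `P`-embedding back, since a redirected edge `i E' l` is the path
`i E j E l` of `T`.
-/

namespace PTree

open Relation

variable {P : Type} [PartialOrder P] (T : PTree P)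

theorem eq_of_E_of_E {a b n : T.N} (ha : T.E a n) (hb : T.E b n) : a = b := by
  obtain ⟨r, -, hparent, hroot⟩ := T.isTree
  have hnr : n ≠ r := by rintro rfl; exact hroot a ha
  exact (hparent n hnr).unique ha hb

theorem ne_of_E {a b : T.N} (hab : T.E a b) : a ≠ b := by
  intro h
  rw [← h] at hab
  obtain ⟨r, hreach, -, hroot⟩ := T.isTree
  -- Since `a` is its own unique parent, no path from the root can enter `a`.
  have hne : ∀ n, ReflTransGen T.E r n → n ≠ a := by
    intro n hn
    induction hn with
    | refl => intro hra; exact hroot a (hra ▸ hab)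
    | tail _ hmn ih => rintro rfl; exact ih (T.eq_of_E_of_E hmn hab)
  exact hne a (hreach a) rfl

variable {T} {i j : T.N}

/-- The edge relation `E'` of the paper, on `N' = N \ {j}` encoded as a subtype. -/
def contractE (i j : T.N) (k l : {n : T.N // n ≠ j}) : Prop :=
  T.E k.1 l.1 ∨ (k.1 = i ∧ T.E j l.1)

open Classical in
noncomputable def collapse (hij : i ≠ j) (n : T.N) : {n : T.N // n ≠ j} :=
  if h : n = j then ⟨i, hij⟩ else ⟨n, h⟩

theorem collapse_self (hij : i ≠ j) : collapse hij j = ⟨i, hij⟩ := dif_pos rfl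

theorem collapse_of_ne (hij : i ≠ j) {n : T.N} (hn : n ≠ j) : collapse hij n = ⟨n, hn⟩ :=
  dif_neg hn

theorem collapse_val (hij : i ≠ j) (n : {n : T.N // n ≠ j}) : collapse hij n.1 = n :=
  collapse_of_ne hij n.2

theorem contractE_iff (hij : i ≠ j) (k l : {n : T.N // n ≠ j}) :
    contractE i j k l ↔ ∃ m, T.E m l.1 ∧ collapse hij m = k := by
  constructor
  · rintro (hkl | ⟨hki, hjl⟩)
    · exact ⟨k.1, hkl, collapse_val hij k⟩
    · exact ⟨j, hjl, by rw [collapse_self]; exact Subtype.ext hki.symm⟩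
  · rintro ⟨m, hml, rfl⟩
    by_cases hmj : m = j
    · subst hmj
      rw [collapse_self]
      exact Or.inr ⟨rfl, hml⟩
    · rw [collapse_of_ne hij hmj]
      exact Or.inl hml

theorem reflTransGen_contractE_collapse (hE : T.E i j) {a b : T.N} (hab : T.E a b) :
    ReflTransGen (contractE i j) (collapse (T.ne_of_E hE) a) (collapse (T.ne_of_E hE) b) := by
  by_cases hbj : b = j
  · subst hbj
    rw [T.eq_of_E_of_E hab hE, collapse_self, collapse_of_ne _ (T.ne_of_E hE)]
  · rw [collapse_of_ne _ hbj]
    exact .single ((contractE_iff _ _ _).2 ⟨a, hab, rfl⟩)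

theorem contractE_isTree (hE : T.E i j) :
    ∃ r : {n : T.N // n ≠ j}, (∀ n, ReflTransGen (contractE i j) r n) ∧
      (∀ n, n ≠ r → ∃! m, contractE i j m n) ∧ (∀ n, ¬ contractE i j n r) := by
  have hij := T.ne_of_E hE
  obtain ⟨r, hreach, hparent, hroot⟩ := T.isTree
  have hrj : r ≠ j := by rintro rfl; exact hroot i hE
  refine ⟨⟨r, hrj⟩, fun n => ?_, fun n hnr => ?_, fun n => ?_⟩
  · rw [← collapse_val hij n, ← collapse_of_ne hij hrj]
    exact (hreach n.1).lift' _ fun a b hab => reflTransGen_contractE_collapse hE hab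
  · -- The new parent of `n` is the collapse of its old parent.
    obtain ⟨m, hmn, hm⟩ := hparent n.1 fun h => hnr (Subtype.ext h)
    refine ⟨collapse hij m, (contractE_iff hij _ _).2 ⟨m, hmn, rfl⟩, fun k hkn => ?_⟩
    obtain ⟨m', hm'n, rfl⟩ := (contractE_iff hij _ _).1 hkn
    rw [hm m' hm'n]
  · rw [contractE_iff hij]
    rintro ⟨m, hmr, -⟩
    exact hroot m hmr

noncomputable def contract (hE : T.E i j) : PTree P where
  N := {n : T.N // n ≠ j}
  fin := by classical exact @Subtype.fintype _ _ _ T.fin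
  E := contractE i j
  label k := T.label k.1
  isTree := contractE_isTree hE
  mono := by
    rintro k l (hkl | ⟨rfl, hjl⟩)
    · exact T.mono _ _ hkl
    · exact (T.mono _ _ hE).trans (T.mono _ _ hjl)

theorem treeEmb_collapse (hE : T.E i j) (hlab : T.label i = T.label j) :
    TreeEmb T (T.contract hE) (collapse (T.ne_of_E hE)) := by
  refine ⟨fun a b hab => reflTransGen_contractE_collapse hE hab, fun k => ?_⟩
  by_cases hkj : k = j
  · subst hkj
    rw [collapse_self]
    exact hlab.symm
  · rw [collapse_of_ne _ hkj]
    rfl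

theorem treeEmb_contract_val (hE : T.E i j) : TreeEmb (T.contract hE) T Subtype.val := by
  refine ⟨?_, fun k => rfl⟩
  rintro k l (hkl | ⟨hki, hjl⟩)
  · exact .single hkl
  · exact .tail (.single (hki ▸ hE)) hjl

theorem treeEquiv_contract (hE : T.E i j) (hlab : T.label i = T.label j) :
    TreeEquiv T (T.contract hE) :=
  ⟨⟨_, treeEmb_collapse hE hlab⟩, ⟨_, treeEmb_contract_val hE⟩⟩

end PTree

theorem stmt3_general (P : Type) [PartialOrder P] (T : PTree P) (i j : T.N)
    (hE : T.E i j) (hlab : T.label i = T.label j) :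
    ∃ (T' : PTree P) (e : T'.N ≃ {k : T.N // k ≠ j}),
      (∀ k l : T'.N, T'.E k l ↔ (T.E (e k).1 (e l).1 ∨ ((e k).1 = i ∧ T.E j (e l).1))) ∧
      (∀ k : T'.N, T'.label k = T.label (e k).1) ∧
      TreeEquiv T T' :=
  ⟨T.contract hE, Equiv.refl _, fun _ _ => Iff.rfl, fun _ => rfl, T.treeEquiv_contract hE hlab⟩

/-- eliminating a duplicate `(i,j)` (with `i E j` and equal labels)
by deleting `j` and redirecting its children to `i` yields a `P`-labelled tree
on the strictly smaller node set `N \ {j}` that is `∼`-equivalent to `T`. -/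
theorem stmt3 (P : Type) [Fintype P] [PartialOrder P] (T : PTree P) (i j : T.N)
    (hE : T.E i j) (hlab : T.label i = T.label j) :
    ∃ (T' : PTree P) (e : T'.N ≃ {k : T.N // k ≠ j}),
      (∀ k l : T'.N, T'.E k l ↔ (T.E (e k).1 (e l).1 ∨ ((e k).1 = i ∧ T.E j (e l).1))) ∧
      (∀ k : T'.N, T'.label k = T.label (e k).1) ∧
      TreeEquiv T T' :=
  stmt3_general P T i j hE hlab
end

section
/- If a strict P-labelled tree contains a triplicate (i,j,k), i.e., k E i, k E j, i ≠ j, and the subtrees rooted at i and at j are P-isomorphic, then removing the subtree rooted at j yields a strict P-labelled tree on a strictly smaller node set that is ∼-equivalent to the original. -/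
open Relation

theorem Relation.ReflTransGen.mem_of_mem {α : Type*} {r : α → α → Prop} {S : Set α}
    (hS : ∀ a b, r a b → b ∈ S → a ∈ S) {a b : α} (h : ReflTransGen r a b) (hb : b ∈ S) :
    a ∈ S := by
  induction h with
  | refl => exact hb
  | tail _ hcb ih => exact ih (hS _ _ hcb hb)

theorem Relation.ReflTransGen.subtype {α : Type*} {r : α → α → Prop} {S : Set α}
    (hS : ∀ a b, r a b → b ∈ S → a ∈ S) {a b : α} (h : ReflTransGen r a b) (hb : b ∈ S) :
    ReflTransGen (fun x y : S => r x y) ⟨a, h.mem_of_mem hS hb⟩ ⟨b, hb⟩ := by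
  induction h with
  | refl => rfl
  | tail _ hcb ih => exact (ih (hS _ _ hcb hb)).tail hcb

namespace PTree

variable {P : Type} [PartialOrder P] (T : PTree P)

theorem label_le_of_reflTransGen {a b : T.N} (h : ReflTransGen T.E a b) :
    T.label a ≤ T.label b := by
  simpa [reflTransGen_eq_self] using h.lift T.label T.mono

theorem reflTransGen_total {a b n : T.N} (han : ReflTransGen T.E a n)
    (hbn : ReflTransGen T.E b n) : ReflTransGen T.E a b ∨ ReflTransGen T.E b a := by
  induction han generalizing b with
  | refl => exact Or.inr hbn
  | tail ham hmn ih =>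
    rcases hbn.cases_tail with rfl | ⟨m', hbm', hm'n⟩
    · exact Or.inl (ham.tail hmn)
    · exact ih (T.eq_of_E_of_E hm'n hmn ▸ hbm')

theorem eq_of_E_of_reflTransGen {a b j : T.N} (hab : T.E a b) (hjb : ReflTransGen T.E j b)
    (hja : ¬ ReflTransGen T.E j a) : b = j := by
  rcases hjb.cases_tail with hbj | ⟨m, hjm, hmb⟩
  · exact hbj
  · exact absurd (T.eq_of_E_of_E hmb hab ▸ hjm) hja

noncomputable def restrict (S : Set T.N) (hS : ∀ a b, T.E a b → b ∈ S → a ∈ S)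
    (hne : S.Nonempty) : PTree P where
  N := S
  fin := haveI := T.fin; Fintype.ofFinite S
  E a b := T.E a b
  label a := T.label a
  isTree := by
    obtain ⟨r, hreach, hparent, hroot⟩ := T.isTree
    obtain ⟨x, hx⟩ := hne
    have hr : r ∈ S := (hreach x).mem_of_mem hS hx
    refine ⟨⟨r, hr⟩, fun n => (hreach n).subtype hS n.2, fun n hn => ?_,
      fun n => hroot n⟩
    obtain ⟨m, hmn, hm⟩ := hparent n (fun h => hn (Subtype.ext h))
    exact ⟨⟨m, hS _ _ hmn n.2⟩, hmn, fun m' hm' => Subtype.ext (hm m' hm')⟩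
  mono a b := T.mono a b

end PTree

namespace StrictTree

variable {P : Type} [PartialOrder P] {T : PTree P}

theorem not_reflTransGen_of_E (hT : StrictTree T) {a b : T.N} (h : T.E a b) :
    ¬ ReflTransGen T.E b a :=
  fun hba => (hT a b h).not_ge (T.label_le_of_reflTransGen hba)

theorem not_reflTransGen_of_siblings (hT : StrictTree T) {i j k : T.N} (hi : T.E k i)
    (hj : T.E k j) (hij : i ≠ j) : ¬ ReflTransGen T.E i j := by
  intro h
  rcases h.cases_tail with rfl | ⟨m, him, hmj⟩
  · exact hij rfl
  · exact hT.not_reflTransGen_of_E hi (T.eq_of_E_of_E hmj hj ▸ him)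

theorem disjoint_subtrees_of_siblings (hT : StrictTree T) {i j k n : T.N} (hi : T.E k i)
    (hj : T.E k j) (hij : i ≠ j) (hin : ReflTransGen T.E i n) : ¬ ReflTransGen T.E j n := fun hjn =>
  (T.reflTransGen_total hin hjn).elim (hT.not_reflTransGen_of_siblings hi hj hij)
    (hT.not_reflTransGen_of_siblings hj hi hij.symm)

theorem subtreeEquiv_symm_root (hT : StrictTree T) {i j : T.N}
    (g : {n : T.N // ReflTransGen T.E i n} ≃ {n : T.N // ReflTransGen T.E j n})
    (hg : ∀ a b, T.E a.1 b.1 ↔ T.E (g a).1 (g b).1) :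
    g.symm ⟨j, .refl⟩ = ⟨i, .refl⟩ := by
  set a := g.symm ⟨j, .refl⟩ with ha
  rcases a.2.cases_tail with hai | ⟨m, him, hma⟩
  · exact Subtype.ext hai
  · have hE : T.E (g ⟨m, him⟩).1 j := by
      simpa [ha] using (hg ⟨m, him⟩ a).mp hma
    exact absurd (g ⟨m, him⟩).2 (hT.not_reflTransGen_of_E hE)

end StrictTree

namespace PTree

variable {P : Type} [PartialOrder P] (T : PTree P)

noncomputable def foldSubtree {i j : T.N}
    (g : {n : T.N // ReflTransGen T.E i n} ≃ {n : T.N // ReflTransGen T.E j n}) (n : T.N) :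
    T.N :=
  open Classical in if h : ReflTransGen T.E j n then (g.symm ⟨n, h⟩).1 else n

variable {T}

theorem foldSubtree_not_reflTransGen (hT : StrictTree T) {i j k : T.N} (hi : T.E k i)
    (hj : T.E k j) (hij : i ≠ j)
    (g : {n : T.N // ReflTransGen T.E i n} ≃ {n : T.N // ReflTransGen T.E j n}) (n : T.N) :
    ¬ ReflTransGen T.E j (T.foldSubtree g n) := by
  unfold foldSubtree
  split_ifs with hjn
  · exact hT.disjoint_subtrees_of_siblings hi hj hij (g.symm _).2
  · exact hjn

theorem label_foldSubtree {i j : T.N}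
    {g : {n : T.N // ReflTransGen T.E i n} ≃ {n : T.N // ReflTransGen T.E j n}}
    (hg : ∀ a, T.label a.1 = T.label (g a).1) (n : T.N) :
    T.label (T.foldSubtree g n) = T.label n := by
  unfold foldSubtree
  split_ifs with hjn
  · simpa using hg (g.symm ⟨n, hjn⟩)
  · rfl

theorem E_foldSubtree (hT : StrictTree T) {i j k : T.N} (hi : T.E k i) (hj : T.E k j)
    {g : {n : T.N // ReflTransGen T.E i n} ≃ {n : T.N // ReflTransGen T.E j n}}
    (hg : ∀ a b, T.E a.1 b.1 ↔ T.E (g a).1 (g b).1) {a b : T.N} (hab : T.E a b) :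
    T.E (T.foldSubtree g a) (T.foldSubtree g b) := by
  unfold foldSubtree
  by_cases hja : ReflTransGen T.E j a
  · have hjb : ReflTransGen T.E j b := hja.tail hab
    rw [dif_pos hja, dif_pos hjb, hg]
    simpa using hab
  · rw [dif_neg hja]
    split_ifs with hjb
    · obtain rfl := T.eq_of_E_of_reflTransGen hab hjb hja
      obtain rfl := T.eq_of_E_of_E hab hj
      rw [hT.subtreeEquiv_symm_root g hg]
      exact hi
    · exact hab

end PTree

theorem stmt4_general (P : Type) [PartialOrder P] (T : PTree P)
    (hstrict : StrictTree T) (i j k : T.N)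
    (h1 : T.E k i) (h2 : T.E k j) (hij : i ≠ j) (hiso : SubIso T i j) :
    ∃ (T' : PTree P) (e : T'.N ≃ {n : T.N // ¬ Relation.ReflTransGen T.E j n}),
      StrictTree T' ∧
      (∀ a b : T'.N, T'.E a b ↔ T.E (e a).1 (e b).1) ∧
      (∀ a : T'.N, T'.label a = T.label (e a).1) ∧
      TreeEquiv T T' := by
  obtain ⟨g, hgE, hgL⟩ := hiso
  let T' := T.restrict {n | ¬ ReflTransGen T.E j n} (fun _ _ hab hb ha => hb (ha.tail hab))
    ⟨k, hstrict.not_reflTransGen_of_E h2⟩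
  have fold_emb : TreeEmb T T' fun n =>
      ⟨T.foldSubtree g n, PTree.foldSubtree_not_reflTransGen hstrict h1 h2 hij g n⟩ :=
    ⟨fun _ _ hab => .single (PTree.E_foldSubtree hstrict h1 h2 hgE hab),
      fun n => (PTree.label_foldSubtree hgL n).symm⟩
  have incl_emb : TreeEmb T' T Subtype.val := ⟨fun _ _ hab => .single hab, fun _ => rfl⟩
  exact ⟨T', Equiv.refl _, fun a b hab => hstrict _ _ hab, fun _ _ => Iff.rfl, fun _ => rfl,
    ⟨_, fold_emb⟩, ⟨_, incl_emb⟩⟩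

/-- removing the subtree rooted at `j` from a strict tree containing
a triplicate `(i,j,k)` yields a strict tree on a strictly smaller node set that
is `∼`-equivalent to the original. -/
theorem stmt4 (P : Type) [Fintype P] [PartialOrder P] (T : PTree P)
    (hstrict : StrictTree T) (i j k : T.N)
    (h1 : T.E k i) (h2 : T.E k j) (hij : i ≠ j) (hiso : SubIso T i j) :
    ∃ (T' : PTree P) (e : T'.N ≃ {n : T.N // ¬ Relation.ReflTransGen T.E j n}),
      StrictTree T' ∧
      (∀ a b : T'.N, T'.E a b ↔ T.E (e a).1 (e b).1) ∧
      (∀ a : T'.N, T'.label a = T.label (e a).1) ∧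
      TreeEquiv T T' :=
  stmt4_general P T hstrict i j k h1 h2 hij hiso
end

section
/- The formula □(p∨q) → ((◇p → □q) → □q) is valid in every downward confluent frame. -/
/-- Formulas of intuitionistic modal logic. -/
inductive Fo : Type
  | atom : ℕ → Fo
  | impl : Fo → Fo → Fo
  | top : Fo
  | bot : Fo
  | and : Fo → Fo → Fo
  | or : Fo → Fo → Fo
  | box : Fo → Fo
  | dia : Fo → Fo

/-- A frame: a nonempty set of worlds with a preorder `le` and a relation `rel`. -/
structure Frame where
  W : Type
  ne : Nonempty W
  le : W → W → Prop
  rel : W → W → Prop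
  le_refl : ∀ s, le s s
  le_trans : ∀ s t u, le s t → le t u → le s u

/-- A valuation assigns `≤`-closed sets of worlds to atoms. -/
def ClosedVal (F : Frame) (V : ℕ → F.W → Prop) : Prop :=
  ∀ p s t, V p s → F.le s t → V p t

/-- Božić–Došen satisfaction. -/
def Sat (F : Frame) (V : ℕ → F.W → Prop) : F.W → Fo → Prop
  | s, .atom p => V p s
  | s, .impl A B => ∀ t, F.le s t → Sat F V t A → Sat F V t B
  | _, .top => True
  | _, .bot => False
  | s, .and A B => Sat F V s A ∧ Sat F V s B
  | s, .or A B => Sat F V s A ∨ Sat F V s B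
  | s, .box A => ∀ t, F.rel s t → Sat F V t A
  | s, .dia A => ∃ t, F.rel s t ∧ Sat F V t A

/-- Downward confluence. -/
def DownConf (F : Frame) : Prop :=
  ∀ s t u, F.le s t → F.rel t u → ∃ v, F.rel s v ∧ F.le v u

/-- Forward confluence. -/
def ForwConf (F : Frame) : Prop :=
  ∀ s t u, F.le t s → F.rel t u → ∃ v, F.rel s v ∧ F.le u v

/-! Downward confluence makes `□` preserve persistence, so at the world `u` where `◇p → □q`
is assumed, `□(p ∨ q)` still holds. At an `R`-successor `w` of `u` either `q` holds, or `p`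
does, and then `u ⊨ ◇p` yields `u ⊨ □q`. -/

def Persistent (F : Frame) (V : ℕ → F.W → Prop) (A : Fo) : Prop :=
  ∀ s t, F.le s t → Sat F V s A → Sat F V t A

namespace Persistent

variable {F : Frame} {V : ℕ → F.W → Prop} {A B : Fo}

theorem atom (hV : ClosedVal F V) (p : ℕ) : Persistent F V (.atom p) :=
  fun s t hst hs => hV p s t hs hst

theorem or (hA : Persistent F V A) (hB : Persistent F V B) : Persistent F V (.or A B) := by
  rintro s t hst (hs | hs)
  · exact Or.inl (hA s t hst hs)
  · exact Or.inr (hB s t hst hs)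

theorem box (hD : DownConf F) (hA : Persistent F V A) : Persistent F V (.box A) := by
  intro s t hst hs u htu
  obtain ⟨v, hsv, hvu⟩ := hD s t u hst htu
  exact hA v u hvu (hs v hsv)

end Persistent

theorem sat_box_or_impl_dia_impl_box_impl_box {F : Frame} (hD : DownConf F)
    {V : ℕ → F.W → Prop} {A B : Fo} (hA : Persistent F V A) (hB : Persistent F V B)
    (s : F.W) :
    Sat F V s (.impl (.box (.or A B)) (.impl (.impl (.dia A) (.box B)) (.box B))) := by
  intro t _ hbox u htu himp w huw
  rcases (hA.or hB).box hD t u htu hbox w huw with hw | hw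
  · exact himp u (F.le_refl u) ⟨w, huw, hw⟩ w huw
  · exact hw

/-- `□(p∨q) → ((◇p → □q) → □q)` is valid in every downward
confluent frame. -/
theorem stmt9 (F : Frame) (hD : DownConf F)
    (V : ℕ → F.W → Prop) (hV : ClosedVal F V) (s : F.W) :
    Sat F V s (.impl (.box (.or (.atom 0) (.atom 1)))
      (.impl (.impl (.dia (.atom 0)) (.box (.atom 1))) (.box (.atom 1)))) :=
  sat_box_or_impl_dia_impl_box_impl_box hD (.atom hV 0) (.atom hV 1) s
end

section
/- In any model based on a downward confluent and forward confluent frame, the Božić–Došen satisfaction relation coincides with the Fischer Servi satisfaction relation, which interprets □A at s as: for all t ≥ s and all u with t R u, u satisfies A. -/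
/-- Fischer Servi satisfaction: as Božić–Došen, except that `□A` holds at `s`
iff `A` holds at every `R`-successor of every `≤`-successor of `s`. -/
def SatFS (F : Frame) (V : ℕ → F.W → Prop) : F.W → Fo → Prop
  | s, .atom p => V p s
  | s, .impl A B => ∀ t, F.le s t → SatFS F V t A → SatFS F V t B
  | _, .top => True
  | _, .bot => False
  | s, .and A B => SatFS F V s A ∧ SatFS F V s B
  | s, .or A B => SatFS F V s A ∨ SatFS F V s B
  | s, .box A => ∀ t, F.le s t → ∀ u, F.rel t u → SatFS F V u A
  | s, .dia A => ∃ t, F.rel s t ∧ SatFS F V t A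

/-! On frames that are downward and forward confluent, Božić–Došen satisfaction is persistent
(upward closed along `≤`). For an upward closed property, downward confluence makes the two box
clauses agree: an `R`-successor of some `t ≥ s` lies above an `R`-successor of `s`. -/

theorem DownConf.forall_rel_iff_forall_le_rel {F : Frame} (hD : DownConf F) {P : F.W → Prop}
    (hP : ∀ s t, F.le s t → P s → P t) (s : F.W) :
    (∀ t, F.rel s t → P t) ↔ ∀ t, F.le s t → ∀ u, F.rel t u → P u := by
  refine ⟨fun h t hst u htu => ?_, fun h t hst => h s (F.le_refl s) t hst⟩
  obtain ⟨v, hsv, hvu⟩ := hD s t u hst htu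
  exact hP v u hvu (h v hsv)

theorem Sat.mono {F : Frame} (hD : DownConf F) (hF : ForwConf F) {V : ℕ → F.W → Prop}
    (hV : ClosedVal F V) (A : Fo) {s t : F.W} (hst : F.le s t) (h : Sat F V s A) :
    Sat F V t A := by
  induction A generalizing s t with
  | atom p => exact hV p s t h hst
  | impl A B => exact fun u htu hA => h u (F.le_trans s t u hst htu) hA
  | top => trivial
  | bot => exact h
  | and A B ihA ihB => exact ⟨ihA hst h.1, ihB hst h.2⟩
  | or A B ihA ihB => exact h.imp (ihA hst) (ihB hst)
  | box A ih => exact (hD.forall_rel_iff_forall_le_rel (fun _ _ => ih) s).1 h t hst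
  | dia A ih =>
      obtain ⟨u, hsu, hu⟩ := h
      obtain ⟨v, htv, huv⟩ := hF t s u hst hsu
      exact ⟨v, htv, ih huv hu⟩

/-- on downward and forward confluent frames, the Božić–Došen
and the Fischer Servi satisfaction relations coincide. -/
theorem stmt14 (F : Frame) (hD : DownConf F) (hF : ForwConf F)
    (V : ℕ → F.W → Prop) (hV : ClosedVal F V) (A : Fo) (s : F.W) :
    Sat F V s A ↔ SatFS F V s A := by
  induction A generalizing s with
  | box A ih =>
      simp only [Sat, SatFS, ← ih]
      exact hD.forall_rel_iff_forall_le_rel (fun s t hst => Sat.mono hD hF hV A hst) s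
  | _ => simp only [Sat, SatFS, *]
end

section
/- For any regular clip (𝒯, ≪, ▷), the frame (𝒯, ≪*, ▷⁺) is upward confluent: if x (▷⁺) y and z (≪*) y then there exists w with w (≪*) x and w (▷⁺) z. -/
/-- A tip: an index, a world of the canonical frame, a rank and a height. -/
abbrev Tip (W : Type) := ℕ × W × ℕ × ℕ

/-- A clip: a finite nonempty set of tips together with two relations on it. -/
structure Clip (W : Type) where
  T : Set (Tip W)
  finite : T.Finite
  nonempty : T.Nonempty
  ll : Tip W → Tip W → Prop
  rr : Tip W → Tip W → Prop
  ll_mem : ∀ a b, ll a b → a ∈ T ∧ b ∈ T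
  rr_mem : ∀ a b, rr a b → a ∈ T ∧ b ∈ T

/-- Coherence of a clip with respect to the canonical preorder `lec` and the
canonical accessibility relation `Rc`. -/
def Coherent {W : Type} (lec Rc : W → W → Prop) (C : Clip W) : Prop :=
  (∀ a b, a ∈ C.T → b ∈ C.T → a.1 = b.1 → a = b) ∧
  (∀ a b, C.ll a b →
    b.1 ≠ a.1 ∧ lec a.2.1 b.2.1 ∧ b.2.2.1 = a.2.2.1 ∧ b.2.2.2 = a.2.2.2 + 1) ∧
  (∀ a b, C.rr a b →
    b.1 ≠ a.1 ∧ Rc a.2.1 b.2.1 ∧ b.2.2.1 = a.2.2.1 + 1 ∧ b.2.2.2 = a.2.2.2)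

/-- Regularity of a coherent clip. -/
def Regular {W : Type} (lec Rc : W → W → Prop) (C : Clip W) : Prop :=
  Coherent lec Rc C ∧
  (∀ a b c, C.ll a c → C.ll b c → a.1 = b.1) ∧
  (∀ a b c, C.rr a c → C.rr b c → a.1 = b.1) ∧
  (∀ a b c, C.rr a b → C.ll c b → ∃ d, C.ll d a ∧ C.rr d c)

/-! The last regularity condition closes a `▷`-step and a `≪`-step into the same tip to a square
below them. Pasting such squares along the `▷⁺`-chain, and then along the `≪*`-chain, yields `w`. -/

namespace Relation

variable {α : Type*} {l r : α → α → Prop}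

theorem TransGen.exists_of_head_square
    (sq : ∀ a b c, r a b → l c b → ∃ d, l d a ∧ r d c)
    {x y z : α} (hxy : TransGen r x y) (hzy : l z y) :
    ∃ w, l w x ∧ TransGen r w z := by
  induction hxy generalizing z with
  | single hxy =>
    obtain ⟨w, hwx, hwz⟩ := sq _ _ _ hxy hzy
    exact ⟨w, hwx, .single hwz⟩
  | tail _ hby ih =>
    obtain ⟨d, hdb, hdz⟩ := sq _ _ _ hby hzy
    obtain ⟨w, hwx, hwd⟩ := ih hdb
    exact ⟨w, hwx, hwd.tail hdz⟩

theorem TransGen.exists_reflTransGen_of_head_square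
    (sq : ∀ a b c, r a b → l c b → ∃ d, l d a ∧ r d c)
    {x y z : α} (hxy : TransGen r x y) (hzy : ReflTransGen l z y) :
    ∃ w, ReflTransGen l w x ∧ TransGen r w z := by
  induction hzy using ReflTransGen.head_induction_on with
  | refl => exact ⟨x, .refl, hxy⟩
  | head hzc _ ih =>
    obtain ⟨v, hvx, hvc⟩ := ih
    obtain ⟨w, hwv, hwz⟩ := hvc.exists_of_head_square sq hzc
    exact ⟨w, hvx.head hwv, hwz⟩

end Relation

/-- for a regular clip, the frame `(𝒯, ≪*, ▷⁺)` is upward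
confluent. -/
theorem stmt16 {W : Type} (lec Rc : W → W → Prop)
    (C : Clip W) (hC : Regular lec Rc C) (x y z : Tip W)
    (h1 : Relation.TransGen C.rr x y) (h2 : Relation.ReflTransGen C.ll z y) :
    ∃ w : Tip W, Relation.ReflTransGen C.ll w x ∧ Relation.TransGen C.rr w z :=
  h1.exists_reflTransGen_of_head_square hC.2.2.2 h2
end

section
/- Let (𝒯, ≪, ▷) be a regular clip and ((i,s,α,X),(j,t,β,Y),(k,u,γ,Z)) a defect of downward confluence. Then no element of 𝒯 is a ≪-predecessor of (k,u,γ,Z). -/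
namespace Regular

variable {W : Type} {lec Rc : W → W → Prop} {C : Clip W}

theorem eq_of_ll_of_ll (hC : Regular lec Rc C) {a b c : Tip W}
    (hac : C.ll a c) (hbc : C.ll b c) : a = b :=
  hC.1.1 a b (C.ll_mem a c hac).1 (C.ll_mem b c hbc).1 (hC.2.1 a b c hac hbc)

theorem rr_of_ll_of_rr_of_ll (hC : Regular lec Rc C) {a b c e : Tip W}
    (hab : C.ll a b) (hbc : C.rr b c) (hec : C.ll e c) : C.rr a e := by
  obtain ⟨d, hdb, hde⟩ := hC.2.2.2 b c e hbc hec
  rwa [hC.eq_of_ll_of_ll hdb hab] at hde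

end Regular

/-- if `(a,b,c)` is a defect of downward confluence of a regular
clip, then no tip of `𝒯` is a `≪`-predecessor of `c`. -/
theorem stmt17 {W : Type} (lec Rc : W → W → Prop)
    (C : Clip W) (hC : Regular lec Rc C) (a b c : Tip W)
    (h1 : C.ll a b) (h2 : C.rr b c)
    (h3 : ∀ d ∈ C.T, ¬ C.rr a d ∨ ¬ C.ll d c) :
    ∀ e ∈ C.T, ¬ C.ll e c := by
  intro e he hec
  rcases h3 e he with hae | hec'
  · exact hae (hC.rr_of_ll_of_rr_of_ll h1 h2 hec)
  · exact hec' hec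
end
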